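/- Let W be a random walk with jumps ≥ -1 and p with P(W_p = -1) > 0. With the notation M_k = L_p(Ŵ^p) - L_{γ_p(k)}(Ŵ^p) and H(W) the discrete height process, the law of the pair (V_0(W), V_0(H(W) + M)) under P(· | W_p = -1) equals the law of (W, H(W)) under P(· | ζ = p), where ζ = inf{ n : W_n = -1 } and all paths are restricted to {0,...,p}. -/

import Mathlib

open MeasureTheory

/-- The discrete height functional:
`H_n(w) = Card { 0 ≤ j < n : w j = min_{j ≤ k ≤ n} w k }`. -/
noncomputable def pathHeight (w : ℕ → ℤ) (n : ℕ) : ℕ :=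
  {j : ℕ | j < n ∧ w j = sInf (w '' Set.Icc j n)}.ncard

/-- `L_n(w) = Card { 0 < j ≤ n : w j = max_{0 ≤ k ≤ j} w k }`. -/
noncomputable def pathL (w : ℕ → ℤ) (n : ℕ) : ℕ :=
  {j : ℕ | 0 < j ∧ j ≤ n ∧ w j = sSup (w '' Set.Icc 0 j)}.ncard

/-- The time-space reversed path `ŵ^p(k) = w(p) - w(p-k)`. -/
def pathRev (w : ℕ → ℤ) (p : ℕ) : ℕ → ℤ := fun k => w p - w (p - k)

/-- The first passage time `t(a,w) = inf { k ∈ [0,z] : w k ≥ a }` (with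
`inf ∅ = ⊤` in `ℕ∞`). -/
noncomputable def firstPassage (z : ℕ) (a : ℤ) (w : ℕ → ℤ) : ℕ∞ :=
  sInf ((fun j : ℕ => (j : ℕ∞)) '' {j : ℕ | j ≤ z ∧ a ≤ w j})

/-- `γ_p(k) = p ∧ ( t( -min_{0 ≤ i ≤ k} w i, ŵ^p ) - 1 )_+`. -/
noncomputable def gammaP (w : ℕ → ℤ) (p k : ℕ) : ℕ :=
  (min (p : ℕ∞)
    (firstPassage p (-(sInf (w '' Set.Icc 0 k))) (pathRev w p) - 1)).toNat

/-- `M_k = L_p(ŵ^p) - L_{γ_p(k)}(ŵ^p)`. -/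
noncomputable def pathM (w : ℕ → ℤ) (p k : ℕ) : ℕ :=
  pathL (pathRev w p) p - pathL (pathRev w p) (gammaP w p k)

/-- `G(w)`: the first time in `{0,…,p}` at which `w` attains its minimum over
`{0,…,p}`. -/
noncomputable def firstMin (p : ℕ) (w : ℕ → ℤ) : ℕ :=
  sInf {k : ℕ | k ≤ p ∧ ∀ j ≤ p, w k ≤ w j}

/-- The discrete Vervaat transform of the path `(w k; 0 ≤ k ≤ p)`: cyclic shift at
the first minimum. -/
noncomputable def vervaat0 (p : ℕ) (w : ℕ → ℤ) : ℕ → ℤ := fun k =>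
  if k ≤ p - firstMin p w then w (k + firstMin p w) - sInf (w '' Set.Icc 0 p)
  else w (k + firstMin p w - p) + w p - sInf (w '' Set.Icc 0 p) - w 0

/-!
Write a bridge `w` (`w 0 = 0`, `w p = -1`) as the partial sums of its increments `x`. Rotating `x`
by the first minimum `G` of `w` gives the increments of the excursion `V₀(w)`. Conversely, by the
cycle lemma, if all steps are `≥ -1` then among the rotations of `x` by `1, …, p` only the one by
`G` is an excursion. As rotations preserve the product law of the increments, for every set `B` of
excursions `P(W_p = -1, V₀(W) ∈ B) = p · P(W ∈ B)`; the theorem follows by applying this to the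
excursions with prescribed path and height, and to all excursions.

It remains to see that `H(V₀ w) = V₀(H(w) + M)` on `[0, p]`. The future-minimum times of `V₀ w`
before `p - G` are those of `w` after `G`. At time `p - G + r`, the ones after `p - G` are those
of `w` on `[0, r]`, and the ones before `p - G` are the future-minimum times of `w` after `G` that
lie strictly below `min_{[0, r]} w`; reversing time turns these into the weak ladder times of `ŵ^p`
after `γ_p(r)`, whose number is `M_r`. Finally `H(w) + M` is `≥ 0`, vanishes at `G` and is
positive before `G` unless `G = p` (when shifting at `0` or at `p` is the same), so `V₀` shifts it
at the same time as `w`.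
-/

open Finset

lemma card_filter_range_add (P : ℕ → Prop) [DecidablePred P] (m n : ℕ) :
    #{j ∈ range (m + n) | P j} = #{j ∈ range m | P j} + #{j ∈ range n | P (m + j)} := by
  simp only [card_filter, sum_range_add]

lemma card_filter_Ioc_reflect (P : ℕ → Prop) [DecidablePred P] (p : ℕ) :
    #{j ∈ Ioc 0 p | P (p - j)} = #{i ∈ range p | P i} := by
  refine card_nbij' (p - ·) (p - ·) (fun j hj => ?_) (fun i hi => ?_) (fun j hj => ?_)
    (fun i hi => ?_) <;> simp only [coe_filter, mem_Ioc, mem_range, Set.mem_ofPred_eq] at *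
  · exact ⟨by omega, hj.2⟩
  · rw [Nat.sub_sub_self (by omega)]; exact ⟨⟨by omega, by omega⟩, hi.2⟩
  · omega
  · omega

lemma forall_mem_Icc_add_iff {Q : ℕ → Prop} {a b s : ℕ} :
    (∀ m ∈ Icc (s + a) (s + b), Q m) ↔ ∀ l ∈ Icc a b, Q (s + l) := by
  rw [← map_add_left_Icc, forall_mem_map]
  rfl

lemma forall_mem_Icc_reflect {Q : ℕ → Prop} {j p : ℕ} (hj : j ≤ p) :
    (∀ l ≤ j, Q (p - l)) ↔ ∀ m ∈ Icc (p - j) p, Q m := by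
  refine ⟨fun h m hm => ?_, fun h l hl => h _ (by simp at hl ⊢; omega)⟩
  simp only [mem_Icc] at hm
  simpa [Nat.sub_sub_self hm.2] using h (p - m) (by simp; omega)

section Records

variable (w : ℕ → ℤ)

lemma eq_sInf_image_iff {s : Set ℕ} (hs : s.Finite) {j : ℕ} (hj : j ∈ s) :
    w j = sInf (w '' s) ↔ ∀ k ∈ s, w j ≤ w k :=
  ⟨fun h _ hk => h ▸ csInf_le (hs.image w).bddBelow (Set.mem_image_of_mem w hk),
    fun h => (IsLeast.csInf_eq ⟨Set.mem_image_of_mem w hj, Set.forall_mem_image.2 h⟩).symm⟩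

lemma eq_sSup_image_iff {s : Set ℕ} (hs : s.Finite) {j : ℕ} (hj : j ∈ s) :
    w j = sSup (w '' s) ↔ ∀ k ∈ s, w k ≤ w j :=
  ⟨fun h _ hk => h ▸ le_csSup (hs.image w).bddAbove (Set.mem_image_of_mem w hk),
    fun h => (IsGreatest.csSup_eq ⟨Set.mem_image_of_mem w hj, Set.forall_mem_image.2 h⟩).symm⟩

lemma lt_sInf_image_Icc_zero_iff (a : ℤ) (r : ℕ) :
    a < sInf (w '' Set.Icc 0 r) ↔ ∀ m ≤ r, a < w m := by
  rw [((Set.finite_Icc 0 r).image w).lt_csInf_iff ((Set.nonempty_Icc.2 (Nat.zero_le r)).image w),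
    Set.forall_mem_image]
  simp

lemma pathHeight_eq_card (n : ℕ) :
    pathHeight w n = #{j ∈ range n | ∀ k ∈ Icc j n, w j ≤ w k} := by
  rw [pathHeight, ← Set.ncard_coe_finset]
  congr 1; ext j
  simp only [coe_filter, mem_range, Set.mem_ofPred_eq]
  refine and_congr_right fun hj => ?_
  rw [eq_sInf_image_iff w (Set.finite_Icc j n) (Set.left_mem_Icc.2 hj.le)]
  simp

lemma pathL_eq_card (n : ℕ) :
    pathL w n = #{j ∈ Ioc 0 n | ∀ k ≤ j, w k ≤ w j} := by
  rw [pathL, ← Set.ncard_coe_finset]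
  congr 1; ext j
  simp only [coe_filter, mem_Ioc, Set.mem_ofPred_eq, and_assoc]
  refine and_congr_right fun _ => and_congr_right fun _ => ?_
  rw [eq_sSup_image_iff w (Set.finite_Icc 0 j) (Set.right_mem_Icc.2 (Nat.zero_le j))]
  simp

lemma pathL_sub_pathL {γ n : ℕ} (h : γ ≤ n) :
    pathL w n - pathL w γ = #{j ∈ Ioc γ n | ∀ k ≤ j, w k ≤ w j} := by
  rw [pathL_eq_card, pathL_eq_card, card_filter, card_filter,
    ← sum_Ioc_consecutive _ (Nat.zero_le γ) h, card_filter, Nat.add_sub_cancel_left]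

variable {w}

lemma pathHeight_congr {w' : ℕ → ℤ} {n : ℕ} (h : ∀ i ≤ n, w i = w' i) :
    pathHeight w n = pathHeight w' n := by
  simp only [pathHeight_eq_card]
  refine congrArg card (filter_congr fun j hj => forall₂_congr fun k hk => ?_)
  simp only [mem_range, mem_Icc] at hj hk
  rw [h j hj.le, h k hk.2]

end Records

section FirstMin

variable (w : ℕ → ℤ) (p : ℕ)

lemma firstMin_mem : firstMin p w ≤ p ∧ ∀ j ≤ p, w (firstMin p w) ≤ w j := by
  obtain ⟨k, hk, hmin⟩ := (range (p + 1)).exists_min_image w nonempty_range_add_one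
  exact Nat.sInf_mem (s := {k | k ≤ p ∧ ∀ j ≤ p, w k ≤ w j})
    ⟨k, mem_range_succ_iff.1 hk, fun j hj => hmin j (mem_range_succ_iff.2 hj)⟩

lemma firstMin_le : firstMin p w ≤ p := (firstMin_mem w p).1

lemma firstMin_min {j : ℕ} (hj : j ≤ p) : w (firstMin p w) ≤ w j := (firstMin_mem w p).2 j hj

lemma lt_of_lt_firstMin {j : ℕ} (hj : j < firstMin p w) : w (firstMin p w) < w j := by
  have hjp : j ≤ p := hj.le.trans (firstMin_le w p)
  obtain ⟨i, hip, hi⟩ : ∃ i ≤ p, w i < w j := by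
    simpa [hjp] using Nat.notMem_of_lt_sInf hj
  exact (firstMin_min w p hip).trans_lt hi

lemma sInf_image_Icc_eq_firstMin : sInf (w '' Set.Icc 0 p) = w (firstMin p w) :=
  ((eq_sInf_image_iff w (Set.finite_Icc 0 p) ⟨Nat.zero_le _, firstMin_le w p⟩).2
    fun _ hj => firstMin_min w p hj.2).symm

variable {w p}

lemma firstMin_eq {G : ℕ} (hG : G ≤ p) (hmin : ∀ j ≤ p, w G ≤ w j)
    (hlt : ∀ j < G, w G < w j) : firstMin p w = G := by
  refine le_antisymm (Nat.sInf_le ⟨hG, hmin⟩) (not_lt.1 fun h => ?_)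
  exact (hlt _ h).not_ge (firstMin_min w p hG)

lemma firstMin_congr {w' : ℕ → ℤ} (h : ∀ i ≤ p, w i = w' i) : firstMin p w = firstMin p w' := by
  refine (firstMin_eq (firstMin_le w p) (fun j hj => ?_) (fun j hj => ?_)).symm
  · rw [← h _ (firstMin_le w p), ← h j hj]; exact firstMin_min w p hj
  · rw [← h _ (firstMin_le w p), ← h j (hj.le.trans (firstMin_le w p))]
    exact lt_of_lt_firstMin w p hj

lemma one_le_firstMin (hw : w p < w 0) : 1 ≤ firstMin p w :=
  Nat.one_le_iff_ne_zero.2 fun h => (firstMin_min w p le_rfl).not_gt (h ▸ hw)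

lemma pathHeight_firstMin : pathHeight w (firstMin p w) = 0 := by
  rw [pathHeight_eq_card, card_eq_zero, filter_eq_empty_iff]
  intro j hj hrec
  exact (hrec _ (by simp at hj ⊢; omega)).not_gt (lt_of_lt_firstMin w p (mem_range.1 hj))

end FirstMin

section Reversal

lemma firstPassage_le_iff {z j : ℕ} {a : ℤ} {v : ℕ → ℤ} (hj : j ≤ z) :
    firstPassage z a v ≤ j ↔ ∃ l ≤ j, a ≤ v l := by
  unfold firstPassage
  constructor
  · intro h
    by_contra! hlt
    have : ((j + 1 : ℕ) : ℕ∞) ≤ sInf ((fun j : ℕ => (j : ℕ∞)) '' {j : ℕ | j ≤ z ∧ a ≤ v j}) := by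
      refine le_sInf ?_
      rintro _ ⟨l, ⟨-, hal⟩, rfl⟩
      exact Nat.cast_le.2 (not_le.1 fun hl => (hlt l hl).not_ge hal)
    exact absurd (this.trans h) (by norm_cast; omega)
  · rintro ⟨l, hl, hal⟩
    exact le_trans (sInf_le ⟨l, ⟨hl.trans hj, hal⟩, rfl⟩) (Nat.cast_le.2 hl)

lemma toNat_min_sub_one_lt_iff {t : ℕ∞} {p j : ℕ} (hj : j ∈ Ioc 0 p) :
    (min (p : ℕ∞) (t - 1)).toNat < j ↔ t ≤ j := by
  simp only [mem_Ioc] at hj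
  induction t using ENat.recTopCoe with
  | top => simpa using hj.2
  | coe n =>
    rw [← ENat.natCast_one, ← ENat.natCast_sub, ← Nat.mono_cast.map_min, ENat.toNat_natCast,
      Nat.cast_le]
    omega

lemma gammaP_le (w : ℕ → ℤ) (p k : ℕ) : gammaP w p k ≤ p :=
  ENat.toNat_le_of_le_natCast (min_le_left _ _)

lemma gammaP_lt_iff {w : ℕ → ℤ} {p k j : ℕ} (hj : j ∈ Ioc 0 p)
    (hrec : ∀ l ≤ j, pathRev w p l ≤ pathRev w p j) :
    gammaP w p k < j ↔ -sInf (w '' Set.Icc 0 k) ≤ pathRev w p j := by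
  rw [gammaP, toNat_min_sub_one_lt_iff hj, firstPassage_le_iff (mem_Ioc.1 hj).2]
  exact ⟨fun ⟨l, hl, h⟩ => h.trans (hrec l hl), fun h => ⟨j, le_rfl, h⟩⟩

variable {w : ℕ → ℤ} {p : ℕ}

lemma pathM_eq_card (hwp : w p = -1) (r : ℕ) :
    pathM w p r = #{i ∈ range p | (∀ m ∈ Icc i p, w i ≤ w m) ∧ ∀ m ≤ r, w i < w m} := by
  have hrec {j : ℕ} (hj : j ≤ p) : (∀ l ≤ j, pathRev w p l ≤ pathRev w p j) ↔
      ∀ m ∈ Icc (p - j) p, w (p - j) ≤ w m := by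
    simp only [pathRev, sub_le_sub_iff_left]
    exact forall_mem_Icc_reflect (Q := fun m => w (p - j) ≤ w m) hj
  have hlow (j : ℕ) : -sInf (w '' Set.Icc 0 r) ≤ pathRev w p j ↔ ∀ m ≤ r, w (p - j) < w m := by
    rw [pathRev, hwp, ← lt_sInf_image_Icc_zero_iff]
    omega
  rw [pathM, pathL_sub_pathL _ (gammaP_le w p r), ← card_filter_Ioc_reflect]
  congr 1; ext j
  simp only [mem_filter, mem_Ioc, ← hlow]
  constructor
  · rintro ⟨⟨hγ, hjp⟩, hj⟩
    have hj0 : j ∈ Ioc 0 p := mem_Ioc.2 ⟨by omega, hjp⟩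
    exact ⟨⟨by omega, hjp⟩, (hrec hjp).1 hj, (gammaP_lt_iff hj0 hj).1 hγ⟩
  · rintro ⟨⟨hj0, hjp⟩, hj, hlow⟩
    rw [← hrec hjp] at hj
    exact ⟨⟨(gammaP_lt_iff (mem_Ioc.2 ⟨hj0, hjp⟩) hj).2 hlow, hjp⟩, hj⟩

lemma pathM_eq_zero (hwp : w p = -1) {k : ℕ} (hk : firstMin p w ≤ k) : pathM w p k = 0 := by
  rw [pathM_eq_card hwp, card_eq_zero, filter_eq_empty_iff]
  rintro i hi ⟨-, hlow⟩
  exact (hlow _ hk).not_ge (firstMin_min w p (mem_range.1 hi).le)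

lemma one_le_pathM (hwp : w p = -1) (hG : firstMin p w < p) {k : ℕ} (hk : k < firstMin p w) :
    1 ≤ pathM w p k := by
  rw [pathM_eq_card hwp, Nat.one_le_iff_ne_zero, ← pos_iff_ne_zero, card_pos]
  refine ⟨firstMin p w, mem_filter.2 ⟨mem_range.2 hG, fun m hm => ?_, fun m hm => ?_⟩⟩
  · exact firstMin_min w p (mem_Icc.1 hm).2
  · exact lt_of_lt_firstMin w p (by omega)

lemma pathM_zero (hw0 : w 0 = 0) (hwp : w p = -1) : pathM w p 0 = pathHeight w p := by
  rw [pathM_eq_card hwp, pathHeight_eq_card]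
  refine congrArg card (filter_congr fun i hi => and_iff_left_of_imp fun hrec m hm => ?_)
  have := hrec p (mem_Icc.2 ⟨(mem_range.1 hi).le, le_rfl⟩)
  rw [Nat.le_zero.1 hm, hw0]
  omega

lemma pathRev_congr {w' : ℕ → ℤ} (h : ∀ i ≤ p, w i = w' i) : pathRev w p = pathRev w' p :=
  funext fun k => by simp only [pathRev, h p le_rfl, h (p - k) (Nat.sub_le p k)]

lemma pathM_congr {w' : ℕ → ℤ} (h : ∀ i ≤ p, w i = w' i) {k : ℕ} (hk : k ≤ p) :
    pathM w p k = pathM w' p k := by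
  have hmin : sInf (w '' Set.Icc 0 k) = sInf (w' '' Set.Icc 0 k) :=
    congrArg sInf (Set.EqOn.image_eq fun i hi => h i (hi.2.trans hk))
  simp only [pathM, gammaP, pathRev_congr h, hmin]

end Reversal

section CyclicShift

def cyclicShift (p s : ℕ) (w : ℕ → ℤ) (k : ℕ) : ℤ :=
  if k ≤ p - s then w (s + k) - w s else w (k + s - p) + w p - w 0 - w s

variable {w : ℕ → ℤ} {p s k : ℕ}

lemma vervaat0_eq_cyclicShift (w : ℕ → ℤ) (p : ℕ) :
    vervaat0 p w = cyclicShift p (firstMin p w) w := by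
  funext k
  simp only [vervaat0, cyclicShift, sInf_image_Icc_eq_firstMin, add_comm k]
  split_ifs <;> ring

lemma cyclicShift_of_le (hk : k ≤ p - s) : cyclicShift p s w k = w (s + k) - w s :=
  if_pos hk

lemma cyclicShift_of_ge (hs : s ≤ p) (hk : p - s ≤ k) :
    cyclicShift p s w k = w (k + s - p) + w p - w 0 - w s := by
  unfold cyclicShift
  split_ifs with h
  · obtain rfl : k = p - s := by omega
    rw [Nat.sub_add_cancel hs, Nat.sub_self, add_comm, Nat.sub_add_cancel hs]
    ring
  · rfl

lemma cyclicShift_self (hk : k ≤ p) : cyclicShift p p w k = cyclicShift p 0 w k := by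
  rcases k.eq_zero_or_pos with rfl | hk0
  · simp [cyclicShift]
  · rw [cyclicShift, cyclicShift, Nat.sub_self, Nat.sub_zero, if_neg (by omega), if_pos hk,
      Nat.add_sub_cancel, zero_add]
    ring

lemma pathHeight_cyclicShift_of_le (hk : k ≤ p - firstMin p w) :
    pathHeight (cyclicShift p (firstMin p w) w) k = pathHeight w (firstMin p w + k) := by
  set G := firstMin p w
  have hnot : ∀ i ∈ range G, ¬ ∀ m ∈ Icc i (G + k), w i ≤ w m := fun i hi h =>
    (h G (mem_Icc.2 ⟨(mem_range.1 hi).le, Nat.le_add_right G k⟩)).not_gt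
      (lt_of_lt_firstMin w p (mem_range.1 hi))
  rw [pathHeight_eq_card, pathHeight_eq_card, card_filter_range_add, filter_false_of_mem hnot,
    card_empty, zero_add]
  refine congrArg card (filter_congr fun j hj => ?_)
  rw [forall_mem_Icc_add_iff]
  refine forall₂_congr fun l hl => ?_
  simp only [mem_range, mem_Icc] at hj hl
  rw [cyclicShift_of_le (by omega), cyclicShift_of_le (by omega), sub_le_sub_iff_right]

lemma cyclicShift_add_of_bridge (hw0 : w 0 = 0) (hwp : w p = -1) (hs : s ≤ p) (m : ℕ) :
    cyclicShift p s w (p - s + m) = w m - 1 - w s := by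
  rw [cyclicShift_of_ge hs (Nat.le_add_right _ _), show p - s + m + s - p = m by omega, hw0, hwp]
  ring

lemma isFutureMin_cyclicShift_iff (hw0 : w 0 = 0) (hwp : w p = -1) {r j : ℕ}
    (hj : j < p - firstMin p w) :
    (∀ l ∈ Icc j (p - firstMin p w + r),
        cyclicShift p (firstMin p w) w j ≤ cyclicShift p (firstMin p w) w l) ↔
      (∀ m ∈ Icc (firstMin p w + j) p, w (firstMin p w + j) ≤ w m) ∧
        ∀ m ≤ r, w (firstMin p w + j) < w m := by
  set G := firstMin p w
  have hGp : G ≤ p := firstMin_le w p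
  rw [cyclicShift_of_le hj.le]
  constructor
  · intro h
    refine ⟨fun m hm => ?_, fun m hm => ?_⟩
    · simp only [mem_Icc] at hm
      have := h (m - G) (mem_Icc.2 ⟨by omega, by omega⟩)
      rwa [cyclicShift_of_le (by omega), Nat.add_sub_cancel' (by omega),
        sub_le_sub_iff_right] at this
    · have := h (p - G + m) (mem_Icc.2 ⟨by omega, by omega⟩)
      rw [cyclicShift_add_of_bridge hw0 hwp hGp _] at this
      omega
  · rintro ⟨h₁, h₂⟩ l hl
    simp only [mem_Icc] at hl
    rcases le_or_gt l (p - G) with hl' | hl'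
    · rw [cyclicShift_of_le hl', sub_le_sub_iff_right]
      exact h₁ _ (mem_Icc.2 ⟨by omega, by omega⟩)
    · obtain ⟨m, rfl⟩ : ∃ m, l = p - G + m := ⟨l - (p - G), by omega⟩
      rw [cyclicShift_add_of_bridge hw0 hwp hGp _]
      linarith [h₂ m (by omega)]

lemma pathHeight_cyclicShift_add (hw0 : w 0 = 0) (hwp : w p = -1) (r : ℕ) :
    pathHeight (cyclicShift p (firstMin p w) w) (p - firstMin p w + r) =
      pathM w p r + pathHeight w r := by
  set G := firstMin p w
  have hGp : G ≤ p := firstMin_le w p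
  have hnot : ∀ i ∈ range G, ¬ ((∀ m ∈ Icc i p, w i ≤ w m) ∧ ∀ m ≤ r, w i < w m) :=
    fun i hi h => (h.1 G (mem_Icc.2 ⟨(mem_range.1 hi).le, hGp⟩)).not_gt
      (lt_of_lt_firstMin w p (mem_range.1 hi))
  rw [pathHeight_eq_card, card_filter_range_add, pathM_eq_card hwp, pathHeight_eq_card,
    show range p = range (G + (p - G)) by rw [Nat.add_sub_cancel' hGp], card_filter_range_add,
    filter_false_of_mem hnot, card_empty, zero_add]
  congr 1
  · exact congrArg card (filter_congr fun j hj =>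
      isFutureMin_cyclicShift_iff hw0 hwp (mem_range.1 hj))
  · refine congrArg card (filter_congr fun j hj => ?_)
    rw [forall_mem_Icc_add_iff]
    refine forall₂_congr fun l hl => ?_
    simp only [mem_range, mem_Icc] at hj hl
    rw [cyclicShift_add_of_bridge hw0 hwp hGp _,
      cyclicShift_add_of_bridge hw0 hwp hGp _, sub_le_sub_iff_right,
      sub_le_sub_iff_right]

end CyclicShift

section CorrectedHeight

-- Reducible, so that rewriting recognises the `fun m => H + M` written out in the theorem.
noncomputable abbrev correctedHeight (w : ℕ → ℤ) (p n : ℕ) : ℤ :=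
  (pathHeight w n : ℤ) + (pathM w p n : ℤ)

variable {w : ℕ → ℤ} {p : ℕ}

lemma correctedHeight_nonneg (n : ℕ) : 0 ≤ correctedHeight w p n := by
  unfold correctedHeight; positivity

lemma correctedHeight_firstMin (hwp : w p = -1) : correctedHeight w p (firstMin p w) = 0 := by
  simp [correctedHeight, pathHeight_firstMin, pathM_eq_zero hwp le_rfl]

lemma correctedHeight_zero (hw0 : w 0 = 0) (hwp : w p = -1) :
    correctedHeight w p 0 = correctedHeight w p p := by
  simp [correctedHeight, pathM_zero hw0 hwp, pathM_eq_zero hwp (firstMin_le w p),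
    pathHeight_eq_card w 0]

lemma vervaat0_correctedHeight_eq_cyclicShift (hw0 : w 0 = 0) (hwp : w p = -1) {k : ℕ}
    (hk : k ≤ p) : vervaat0 p (correctedHeight w p) k =
      cyclicShift p (firstMin p w) (correctedHeight w p) k := by
  rw [vervaat0_eq_cyclicShift]
  rcases (firstMin_le w p).lt_or_eq with hG | hG
  · congr 1
    refine firstMin_eq (firstMin_le w p) (fun j _ => ?_) (fun j hj => ?_) <;>
      rw [correctedHeight_firstMin hwp]
    · exact correctedHeight_nonneg j
    · have := one_le_pathM hwp hG hj
      unfold correctedHeight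
      omega
  · rw [hG, cyclicShift_self hk]
    congr 1
    have h0 : correctedHeight w p 0 = 0 := by
      rw [correctedHeight_zero hw0 hwp, ← correctedHeight_firstMin hwp, hG]
    refine firstMin_eq (Nat.zero_le p) (fun j _ => ?_) (fun j hj => absurd hj j.not_lt_zero)
    exact h0 ▸ correctedHeight_nonneg j

theorem vervaat0_correctedHeight_eq_pathHeight (hw0 : w 0 = 0) (hwp : w p = -1) {k : ℕ}
    (hk : k ≤ p) : vervaat0 p (correctedHeight w p) k = pathHeight (vervaat0 p w) k := by
  rw [vervaat0_correctedHeight_eq_cyclicShift hw0 hwp hk, vervaat0_eq_cyclicShift]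
  have hGp := firstMin_le w p
  rcases le_or_gt k (p - firstMin p w) with hkG | hkG
  · rw [cyclicShift_of_le hkG, pathHeight_cyclicShift_of_le hkG, correctedHeight_firstMin hwp,
      correctedHeight, pathM_eq_zero hwp (Nat.le_add_right _ k)]
    simp
  · obtain ⟨r, rfl⟩ : ∃ r, k = p - firstMin p w + r := ⟨k - (p - firstMin p w), by omega⟩
    rw [cyclicShift_of_ge hGp (Nat.le_add_right _ _),
      show p - firstMin p w + r + firstMin p w - p = r by omega,
      pathHeight_cyclicShift_add hw0 hwp r, correctedHeight_zero hw0 hwp,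
      correctedHeight_firstMin hwp, correctedHeight]
    push_cast
    ring

end CorrectedHeight

section Increments

variable {p : ℕ}

def incr (x : Fin p → ℤ) (i : ℕ) : ℤ := if h : i < p then x ⟨i, h⟩ else 0

def partialSum (x : Fin p → ℤ) (n : ℕ) : ℤ := ∑ i ∈ range n, incr x i

def rotate (s : ℕ) (x : Fin p → ℤ) : Fin p → ℤ := x ∘ ⇑(finRotate p ^ s)

def IsExcursion (x : Fin p → ℤ) : Prop := (∀ n < p, partialSum x n ≠ -1) ∧ partialSum x p = -1

noncomputable def incrVervaat (x : Fin p → ℤ) : Fin p → ℤ := rotate (firstMin p (partialSum x)) x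

variable {x : Fin p → ℤ}

lemma partialSum_zero : partialSum x 0 = 0 := sum_range_zero _

lemma partialSum_succ (n : ℕ) : partialSum x (n + 1) = partialSum x n + incr x n :=
  sum_range_succ _ n

lemma val_finRotate_pow (s : ℕ) (i : Fin p) : ((finRotate p ^ s) i : ℕ) = (i + s) % p := by
  induction s with
  | zero => simp [Nat.mod_eq_of_lt i.isLt]
  | succ s ih =>
    have := i.neZero
    rw [pow_succ', Equiv.Perm.mul_apply, finRotate_apply, Fin.val_add, ih, Fin.val_one',
      Nat.add_mod_mod, Nat.mod_add_mod, add_assoc]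

lemma rotate_apply (s : ℕ) (x : Fin p → ℤ) (i : Fin p) :
    rotate s x i = x ⟨(i + s) % p, Nat.mod_lt _ i.pos⟩ :=
  congrArg x (Fin.ext (val_finRotate_pow s i))

lemma incr_rotate {s k : ℕ} (hk : k < p) : incr (rotate s x) k = incr x ((k + s) % p) := by
  rw [incr, dif_pos hk, rotate_apply, incr, dif_pos (Nat.mod_lt _ (by omega))]

lemma rotate_rotate {a b : ℕ} (h : a + b = p) (x : Fin p → ℤ) : rotate a (rotate b x) = x := by
  funext i
  rw [rotate_apply, rotate_apply]
  congr 1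
  ext
  simp only [Nat.mod_add_mod, add_assoc, h, Nat.add_mod_right, Nat.mod_eq_of_lt i.isLt]

lemma partialSum_rotate {s : ℕ} (hs : s ≤ p) :
    ∀ k ≤ p, partialSum (rotate s x) k = cyclicShift p s (partialSum x) k
  | 0, _ => by simp [partialSum_zero, cyclicShift_of_le]
  | k + 1, hk => by
    rw [partialSum_succ, partialSum_rotate hs k (by omega), incr_rotate (by omega)]
    rcases le_or_gt (k + 1) (p - s) with hks | hks
    · rw [cyclicShift_of_le (by omega), cyclicShift_of_le hks, ← add_assoc, partialSum_succ,
        Nat.mod_eq_of_lt (show k + s < p by omega), add_comm k s]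
      ring
    · rw [cyclicShift_of_ge hs (by omega), cyclicShift_of_ge hs (by omega),
        show k + 1 + s - p = k + s - p + 1 by omega, partialSum_succ,
        show (k + s) % p = k + s - p by
          rw [Nat.mod_eq_sub_mod (by omega), Nat.mod_eq_of_lt (by omega)]]
      ring

lemma partialSum_rotate_self {s : ℕ} (hs : s ≤ p) : partialSum (rotate s x) p = partialSum x p := by
  rw [partialSum_rotate hs p le_rfl]
  rcases s.eq_zero_or_pos with rfl | hs0
  · simp [cyclicShift_of_le, partialSum_zero]
  · rw [cyclicShift_of_ge hs (Nat.sub_le p s), Nat.add_sub_cancel_left, partialSum_zero]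
    ring

lemma partialSum_incrVervaat {k : ℕ} (hk : k ≤ p) :
    partialSum (incrVervaat x) k = vervaat0 p (partialSum x) k := by
  rw [vervaat0_eq_cyclicShift, incrVervaat, partialSum_rotate (firstMin_le _ p) k hk]

end Increments

section CycleLemma

lemma vervaat0_nonneg {w : ℕ → ℤ} {p k : ℕ} (hw0 : w 0 = 0) (hwp : w p = -1) (hk : k < p) :
    0 ≤ vervaat0 p w k := by
  rw [vervaat0_eq_cyclicShift]
  have hGp := firstMin_le w p
  rcases le_or_gt k (p - firstMin p w) with h | h
  · rw [cyclicShift_of_le h]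
    linarith [firstMin_min w p (show firstMin p w + k ≤ p by omega)]
  · rw [cyclicShift_of_ge hGp h.le, hw0, hwp]
    linarith [lt_of_lt_firstMin w p (show k + firstMin p w - p < firstMin p w by omega)]

lemma vervaat0_self {w : ℕ → ℤ} {p : ℕ} (hw0 : w 0 = 0) (hwp : w p = -1) :
    vervaat0 p w p = -1 := by
  rw [vervaat0_eq_cyclicShift, cyclicShift_of_ge (firstMin_le w p) (Nat.sub_le _ _),
    Nat.add_sub_cancel_left, hw0, hwp]
  ring

variable {p : ℕ} {x : Fin p → ℤ}

lemma isExcursion_incrVervaat (hx : partialSum x p = -1) : IsExcursion (incrVervaat x) := by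
  refine ⟨fun n hn => ?_, ?_⟩
  · rw [partialSum_incrVervaat hn.le]
    linarith [vervaat0_nonneg partialSum_zero hx hn]
  · rw [partialSum_incrVervaat le_rfl, vervaat0_self partialSum_zero hx]

lemma partialSum_nonneg_of_isExcursion (hx : IsExcursion x) (hsteps : ∀ i, -1 ≤ x i) :
    ∀ n < p, 0 ≤ partialSum x n
  | 0, _ => partialSum_zero.ge
  | n + 1, hn => by
    have hstep : -1 ≤ incr x n := by rw [incr, dif_pos (by omega)]; exact hsteps _
    have := partialSum_nonneg_of_isExcursion hx hsteps n (by omega)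
    have := hx.1 (n + 1) hn
    rw [partialSum_succ] at this ⊢
    omega

/-- The cycle lemma of Dvoretzky and Motzkin. -/
lemma firstMin_eq_of_isExcursion_rotate (hx : ∀ i, -1 ≤ x i) {u : ℕ} (hu : u ∈ Icc 1 p)
    (h : IsExcursion (rotate u x)) : firstMin p (partialSum x) = u := by
  obtain ⟨hu1, hup⟩ := mem_Icc.1 hu
  set y := rotate u x
  have hy : ∀ n < p, 0 ≤ partialSum y n :=
    partialSum_nonneg_of_isExcursion h fun _ => hx _
  have hxy : ∀ k ≤ p, partialSum x k = cyclicShift p (p - u) (partialSum y) k := fun k hk => by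
    rw [← partialSum_rotate (Nat.sub_le p u) k hk, rotate_rotate (by omega)]
  have hval₁ {j : ℕ} (hj : j ≤ u) : cyclicShift p (p - u) (partialSum y) j =
      partialSum y (p - u + j) - partialSum y (p - u) := cyclicShift_of_le (by omega)
  have hval₂ {j : ℕ} (hj : u ≤ j) : cyclicShift p (p - u) (partialSum y) j =
      partialSum y (j - u) - 1 - partialSum y (p - u) := by
    rw [cyclicShift_of_ge (Nat.sub_le p u) (by omega), h.2, partialSum_zero,
      show j + (p - u) - p = j - u by omega]
    ring
  rw [firstMin_congr hxy]
  refine firstMin_eq hup (fun j hj => ?_) (fun j hj => ?_) <;>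
    rw [hval₂ le_rfl, Nat.sub_self, partialSum_zero]
  · rcases le_or_gt j u with hju | hju
    · rw [hval₁ hju]
      rcases (show p - u + j ≤ p by omega).lt_or_eq with hlt | heq
      · linarith [hy _ hlt]
      · rw [heq, h.2]
        linarith [hy (p - u) (by omega)]
    · rw [hval₂ hju.le]
      linarith [hy (j - u) (by omega)]
  · rw [hval₁ hj.le]
    linarith [hy (p - u + j) (by omega)]

end CycleLemma

section Law

variable {p : ℕ} {ν : Measure ℤ}

lemma pi_preimage_rotate [SigmaFinite ν] (s : ℕ) (B : Set (Fin p → ℤ)) :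
    Measure.pi (fun _ => ν) (rotate s ⁻¹' B) = Measure.pi (fun _ => ν) B := by
  have := (measurePreserving_piCongrLeft (fun _ : Fin p => ν)
    (finRotate p ^ s).symm).measure_preimage (MeasurableSet.of_discrete (s := B)).nullMeasurableSet
  convert this using 2
  ext x
  simp only [MeasurableEquiv.coe_piCongrLeft, Set.mem_preimage]
  congr! 1
  funext i
  simp [rotate, Equiv.piCongrLeft_apply]

theorem pi_bridge_incrVervaat_mem [SigmaFinite ν] (hν : ν {k | k < -1} = 0) {B : Set (Fin p → ℤ)}
    (hB : ∀ y ∈ B, IsExcursion y) :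
    Measure.pi (fun _ => ν) {x | partialSum x p = -1 ∧ incrVervaat x ∈ B} =
      p * Measure.pi (fun _ => ν) B := by
  set μ := Measure.pi fun _ : Fin p => ν
  set S : Set (Fin p → ℤ) := {x | ∀ i, -1 ≤ x i}
  have hS : μ Sᶜ = 0 := by
    have : Sᶜ = ⋃ i, (fun x => x i) ⁻¹' {k | k < -1} := by ext x; simp [S]
    rw [this]
    exact measure_iUnion_null fun i => Measure.pi_eval_preimage_null _ hν
  have hdecomp : {x | partialSum x p = -1 ∧ incrVervaat x ∈ B} ∩ S =
      ⋃ u ∈ Icc 1 p, rotate u ⁻¹' B ∩ S := by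
    ext x
    simp only [Set.mem_inter_iff, Set.mem_iUnion, Set.mem_preimage, exists_prop, Set.mem_ofPred_eq]
    constructor
    · rintro ⟨⟨hx, hxB⟩, hxS⟩
      refine ⟨_, mem_Icc.2 ⟨one_le_firstMin ?_, firstMin_le _ p⟩, hxB, hxS⟩
      rw [hx, partialSum_zero]
      norm_num
    · rintro ⟨u, hu, hxB, hxS⟩
      have hG := firstMin_eq_of_isExcursion_rotate hxS hu (hB _ hxB)
      refine ⟨⟨?_, by rwa [incrVervaat, hG]⟩, hxS⟩
      rw [← partialSum_rotate_self (mem_Icc.1 hu).2]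
      exact (hB _ hxB).2
  have hdisj : (Icc 1 p : Set ℕ).PairwiseDisjoint fun u => rotate u ⁻¹' B ∩ S := by
    intro u hu v hv huv
    refine Set.disjoint_left.2 fun x hxu hxv => huv ?_
    rw [← firstMin_eq_of_isExcursion_rotate hxu.2 hu (hB _ hxu.1),
      ← firstMin_eq_of_isExcursion_rotate hxv.2 hv (hB _ hxv.1)]
  calc μ {x | partialSum x p = -1 ∧ incrVervaat x ∈ B}
      = μ ({x | partialSum x p = -1 ∧ incrVervaat x ∈ B} ∩ S) := (measure_inter_conull hS).symm
    _ = ∑ u ∈ Icc 1 p, μ (rotate u ⁻¹' B ∩ S) := by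
      rw [hdecomp, measure_biUnion_finset hdisj fun _ _ => MeasurableSet.of_discrete]
    _ = ∑ u ∈ Icc 1 p, μ B := sum_congr rfl fun u _ => by
      rw [measure_inter_conull hS, pi_preimage_rotate]
    _ = p * μ B := by simp

lemma measure_preimage_increments {Ω : Type*} [MeasurableSpace Ω] {P : Measure Ω}
    {ξ : ℕ → Ω → ℤ} (hmeas : ∀ i, Measurable (ξ i)) (hindep : ProbabilityTheory.iIndepFun ξ P)
    (hdist : ∀ i, Measure.map (ξ i) P = ν) (A : Set (Fin p → ℤ)) :
    P ((fun ω (i : Fin p) => ξ i ω) ⁻¹' A) = Measure.pi (fun _ => ν) A := by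
  have h := ProbabilityTheory.iIndepFun.map_fun_eq_pi_map
    (fun i : Fin p => (hmeas i).aemeasurable) (hindep.precomp Fin.val_injective)
  simp only [hdist] at h
  rw [← h, Measure.map_apply (measurable_pi_lambda (fun ω (i : Fin p) => ξ i ω) fun i => hmeas i)
    (MeasurableSet.of_discrete (s := A))]

end Law

section Events

variable {p : ℕ} {w : ℕ → ℤ} {x : Fin p → ℤ}

lemma vervaat0_congr {w' : ℕ → ℤ} (h : ∀ i ≤ p, w i = w' i) {k : ℕ} (hk : k ≤ p) :
    vervaat0 p w k = vervaat0 p w' k := by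
  have hGp := firstMin_le w p
  rw [vervaat0_eq_cyclicShift, vervaat0_eq_cyclicShift, ← firstMin_congr h]
  unfold cyclicShift
  split_ifs
  · rw [h _ (by omega), h _ hGp]
  · rw [h _ (by omega), h _ le_rfl, h _ (Nat.zero_le p), h _ hGp]

lemma correctedHeight_congr {w' : ℕ → ℤ} (h : ∀ i ≤ p, w i = w' i) {k : ℕ} (hk : k ≤ p) :
    correctedHeight w p k = correctedHeight w' p k := by
  rw [correctedHeight, correctedHeight, pathHeight_congr fun i hi => h i (hi.trans hk),
    pathM_congr h hk]

def excursionsWith (p : ℕ) (f g : ℕ → ℤ) : Set (Fin p → ℤ) :=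
  {y | IsExcursion y ∧ ∀ k ≤ p, partialSum y k = f k ∧ (pathHeight (partialSum y) k : ℤ) = g k}

lemma bridge_vervaat_event_iff (hw : ∀ m ≤ p, w m = partialSum x m) (f g : ℕ → ℤ) :
    (w p = -1 ∧ ∀ k ≤ p, vervaat0 p w k = f k ∧ vervaat0 p (correctedHeight w p) k = g k) ↔
      partialSum x p = -1 ∧ incrVervaat x ∈ excursionsWith p f g := by
  rw [hw p le_rfl]
  refine and_congr_right fun hx => ?_
  simp only [excursionsWith, Set.mem_ofPred_eq, isExcursion_incrVervaat hx, true_and]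
  refine forall₂_congr fun k hk => ?_
  rw [vervaat0_congr hw hk, ← partialSum_incrVervaat hk,
    vervaat0_congr (fun i hi => correctedHeight_congr hw hi) hk,
    vervaat0_correctedHeight_eq_pathHeight partialSum_zero hx hk,
    pathHeight_congr fun i hi => partialSum_incrVervaat (hi.trans hk)]

lemma sInf_eq_iff_isExcursion (hp : 1 ≤ p) (hw : ∀ m ≤ p, w m = partialSum x m) :
    sInf {n | w n = -1} = p ↔ IsExcursion x := by
  constructor
  · intro h
    have hne : {n | w n = -1}.Nonempty := Nat.nonempty_of_pos_sInf (by omega)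
    refine ⟨fun n hn hx => Nat.notMem_of_lt_sInf (h ▸ hn) ?_, ?_⟩
    · rw [Set.mem_ofPred_eq, hw n hn.le, hx]
    · rw [← hw p le_rfl, ← h]
      exact Nat.sInf_mem hne
  · rintro ⟨hlt, hx⟩
    have hmem : p ∈ {n | w n = -1} := by rw [Set.mem_ofPred_eq, hw p le_rfl, hx]
    refine le_antisymm (Nat.sInf_le hmem) (le_csInf ⟨p, hmem⟩ fun n hn => ?_)
    refine not_lt.1 fun h => hlt n h ?_
    rw [← hw n h.le]
    exact hn

lemma excursion_event_iff (hp : 1 ≤ p) (hw : ∀ m ≤ p, w m = partialSum x m) (f g : ℕ → ℤ) :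
    (sInf {n | w n = -1} = p ∧ ∀ k ≤ p, w k = f k ∧ (pathHeight w k : ℤ) = g k) ↔
      x ∈ excursionsWith p f g := by
  refine and_congr (sInf_eq_iff_isExcursion hp hw) (forall₂_congr fun k hk => ?_)
  rw [hw k hk, pathHeight_congr fun i hi => hw i (hi.trans hk)]

end Events

theorem vervaat_pair_identity_general {Ω : Type*} [MeasurableSpace Ω] (P : Measure Ω)
    (ν : Measure ℤ) [IsProbabilityMeasure ν] (hν : ν {k : ℤ | k < -1} = 0)
    (ξ : ℕ → Ω → ℤ) (hmeas : ∀ i, Measurable (ξ i))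
    (hindep : ProbabilityTheory.iIndepFun ξ P)
    (hdist : ∀ i, Measure.map (ξ i) P = ν)
    (W : ℕ → Ω → ℤ) (hW : ∀ n ω, W n ω = ∑ i ∈ Finset.range n, ξ i ω)
    (ζ : Ω → ℕ) (hζ : ∀ ω, ζ ω = sInf {n : ℕ | W n ω = -1})
    (p : ℕ) (hp : 1 ≤ p) (f g : ℕ → ℤ) :
    P {ω | W p ω = -1 ∧ ∀ k ≤ p,
        vervaat0 p (fun m => W m ω) k = f k ∧
        vervaat0 p (fun m => (pathHeight (fun i => W i ω) m : ℤ) +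
          (pathM (fun i => W i ω) p m : ℤ)) k = g k} *
      P {ω | ζ ω = p}
    = P {ω | ζ ω = p ∧ ∀ k ≤ p,
        W k ω = f k ∧ (pathHeight (fun i => W i ω) k : ℤ) = g k} *
      P {ω | W p ω = -1} := by
  set X : Ω → Fin p → ℤ := fun ω i => ξ i ω
  have hWX (ω : Ω) : ∀ m ≤ p, W m ω = partialSum (X ω) m := fun m hm => by
    rw [hW, partialSum]
    exact sum_congr rfl fun i hi => by rw [incr, dif_pos (by simp at hi; omega)]
  have hlaw {Q : Ω → Prop} (A : Set (Fin p → ℤ)) (hQ : ∀ ω, Q ω ↔ X ω ∈ A) :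
      P {ω | Q ω} = Measure.pi (fun _ => ν) A := by
    rw [← measure_preimage_increments hmeas hindep hdist A]
    exact congrArg P (Set.ext hQ)
  have hbridge (ω : Ω) :
      W p ω = -1 ↔ partialSum (X ω) p = -1 ∧ IsExcursion (incrVervaat (X ω)) := by
    rw [hWX ω p le_rfl]
    exact (and_iff_left_of_imp isExcursion_incrVervaat).symm
  simp only [hζ]
  rw [hlaw {x | partialSum x p = -1 ∧ incrVervaat x ∈ excursionsWith p f g}
      fun ω => bridge_vervaat_event_iff (hWX ω) f g,
    hlaw _ fun ω => excursion_event_iff hp (hWX ω) f g,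
    hlaw {y | IsExcursion y} fun ω => sInf_eq_iff_isExcursion hp (hWX ω),
    hlaw {x | partialSum x p = -1 ∧ incrVervaat x ∈ {y | IsExcursion y}} hbridge,
    pi_bridge_incrVervaat_mem hν fun y hy => hy.1,
    pi_bridge_incrVervaat_mem (B := {y | IsExcursion y}) hν fun y hy => hy]
  ring

/-- the law of the pair `(V_0(W), V_0(H(W) + M))` under
`P(· | W_p = -1)` equals the law of `(W, H(W))` under `P(· | ζ = p)`, all paths
restricted to `{0,…,p}` (stated in cross-multiplied form for every cylinder
event). -/
theorem vervaat_pair_identity {Ω : Type*} [MeasurableSpace Ω] (P : Measure Ω)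
    [IsProbabilityMeasure P]
    (ν : Measure ℤ) [IsProbabilityMeasure ν] (hν : ν {k : ℤ | k < -1} = 0)
    (ξ : ℕ → Ω → ℤ) (hmeas : ∀ i, Measurable (ξ i))
    (hindep : ProbabilityTheory.iIndepFun ξ P)
    (hdist : ∀ i, Measure.map (ξ i) P = ν)
    (W : ℕ → Ω → ℤ) (hW : ∀ n ω, W n ω = ∑ i ∈ Finset.range n, ξ i ω)
    (ζ : Ω → ℕ) (hζ : ∀ ω, ζ ω = sInf {n : ℕ | W n ω = -1})
    (p : ℕ) (hp : 1 ≤ p) (hpos : P {ω | W p ω = -1} ≠ 0) (f g : ℕ → ℤ) :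
    P {ω | W p ω = -1 ∧ ∀ k ≤ p,
        vervaat0 p (fun m => W m ω) k = f k ∧
        vervaat0 p (fun m => (pathHeight (fun i => W i ω) m : ℤ) +
          (pathM (fun i => W i ω) p m : ℤ)) k = g k} *
      P {ω | ζ ω = p}
    = P {ω | ζ ω = p ∧ ∀ k ≤ p,
        W k ω = f k ∧ (pathHeight (fun i => W i ω) k : ℤ) = g k} *
      P {ω | W p ω = -1} :=
  vervaat_pair_identity_general P ν hν ξ hmeas hindep hdist W hW ζ hζ p hp f g
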